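/- Let M be a compact connected Riemannian surface of index at most I in the sense that any I+1 pairwise disjoint open geodesic balls cannot all be unstable, and suppose every geodesic ball of radius greater than R_c in M is unstable. Then the intrinsic diameter of M is at most 2(I+1)·R_c. -/

import Mathlib

/-!
If two points were at distance `L > 2(I+1)R_c`, cut a minimizing geodesic between them into
`I+1` consecutive segments of length `2R`, `R = L / (2(I+1)) > R_c`. The balls of radius `R`
centred at the midpoints of the segments are pairwise disjoint, since the centres are `2R` apart
along a minimizing geodesic, and all of them are unstable, contradicting the index bound.
-/

open Metric Set

lemma odd_mul_mem_Icc {n : ℕ} {R L : ℝ} (hR : 0 ≤ R) (hnR : 2 * n * R ≤ L) (j : Fin n) :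
    (2 * (j : ℕ) + 1) * R ∈ Icc 0 L := by
  have hj : ((j : ℕ) : ℝ) + 1 ≤ n := by exact_mod_cast j.isLt
  constructor
  · positivity
  · nlinarith

lemma two_mul_le_abs_odd_mul_sub {R : ℝ} (hR : 0 ≤ R) {i j : ℕ} (hij : i ≠ j) :
    2 * R ≤ |(2 * i + 1) * R - (2 * j + 1) * R| := by
  have hsep : (1 : ℝ) ≤ |(i : ℝ) - j| := by
    exact_mod_cast Int.one_le_abs (sub_ne_zero.mpr (Int.natCast_inj.not.mpr hij))
  calc 2 * R = 2 * R * 1 := (mul_one _).symm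
    _ ≤ 2 * R * |(i : ℝ) - j| := by gcongr
    _ = |(2 * i + 1) * R - (2 * j + 1) * R| := by
      rw [show (2 * i + 1) * R - (2 * j + 1) * R = 2 * R * ((i : ℝ) - j) by ring, abs_mul,
        abs_of_nonneg (by positivity : 0 ≤ 2 * R)]

lemma pairwise_disjoint_balls_of_isometry_on_Icc {M : Type*} [PseudoMetricSpace M]
    {Γ : ℝ → M} {L R : ℝ} {n : ℕ}
    (hΓ : ∀ s ∈ Icc 0 L, ∀ t ∈ Icc 0 L, dist (Γ s) (Γ t) = |s - t|)
    (hR : 0 ≤ R) (hnR : 2 * n * R ≤ L) :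
    Pairwise (Function.onFun Disjoint fun j : Fin n => ball (Γ ((2 * (j : ℕ) + 1) * R)) R) := by
  intro i j hij
  apply ball_disjoint_ball
  rw [hΓ _ (odd_mul_mem_Icc hR hnR i) _ (odd_mul_mem_Icc hR hnR j), ← two_mul]
  exact two_mul_le_abs_odd_mul_sub hR (Fin.val_injective.ne hij)

lemma dist_le_of_index_bound {M : Type*} [PseudoMetricSpace M]
    (segment : ∀ p q : M, ∃ Γ : ℝ → M,
      ∀ s ∈ Icc 0 (dist p q), ∀ t ∈ Icc 0 (dist p q), dist (Γ s) (Γ t) = |s - t|)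
    (unstable : Set M → Prop) (I : ℕ) (R_c : ℝ)
    (hindex : ∀ f : Fin (I + 1) → Set M,
      (∀ i, IsOpen (f i) ∧ unstable (f i)) → Pairwise (Function.onFun Disjoint f) → False)
    (hball : ∀ (x : M) (r : ℝ), R_c < r → unstable (ball x r)) (p q : M) :
    dist p q ≤ 2 * (I + 1) * R_c := by
  by_contra! hfar
  obtain ⟨Γ, hΓ⟩ := segment p q
  set R := dist p q / (2 * (I + 1))
  have hR : R_c < R := by rw [lt_div_iff₀ (by positivity)]; linarith
  have hnR : 2 * ((I + 1 : ℕ) : ℝ) * R = dist p q := by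
    push_cast
    exact mul_div_cancel₀ _ (by positivity)
  exact hindex _ (fun _ => ⟨isOpen_ball, hball _ _ hR⟩)
    (pairwise_disjoint_balls_of_isometry_on_Icc hΓ (by positivity) hnR.le)

theorem stmt_17_general {M : Type*} [MetricSpace M] [Nonempty M]
    (geodesic : ∀ p q : M, ∃ Γ : ℝ → M, Γ 0 = p ∧ Γ (dist p q) = q ∧
      ∀ s ∈ Set.Icc 0 (dist p q), ∀ t ∈ Set.Icc 0 (dist p q),
        dist (Γ s) (Γ t) = |s - t|)
    (unstable : Set M → Prop) (I : ℕ) (R_c : ℝ)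
    (hindex : ∀ f : Fin (I + 1) → Set M,
      (∀ i, IsOpen (f i) ∧ unstable (f i)) → Pairwise (Function.onFun Disjoint f) → False)
    (hball : ∀ (x : M) (r : ℝ), R_c < r → unstable (Metric.ball x r)) :
    Metric.diam (Set.univ : Set M) ≤ 2 * (I + 1) * R_c := by
  have hdist := dist_le_of_index_bound (fun p q => (geodesic p q).imp fun _ h => h.2.2)
    unstable I R_c hindex hball
  obtain ⟨x⟩ := ‹Nonempty M›
  exact diam_le_of_forall_dist_le (dist_nonneg.trans (hdist x x)) fun p _ q _ => hdist p q

theorem stmt_17 {M : Type*} [MetricSpace M] [CompactSpace M] [Nonempty M]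
    (hconn : ConnectedSpace M)
    (geodesic : ∀ p q : M, ∃ Γ : ℝ → M, Γ 0 = p ∧ Γ (dist p q) = q ∧
      ∀ s ∈ Set.Icc 0 (dist p q), ∀ t ∈ Set.Icc 0 (dist p q),
        dist (Γ s) (Γ t) = |s - t|)
    (unstable : Set M → Prop) (I : ℕ) (R_c : ℝ) (hRc : 0 < R_c)
    (hindex : ∀ f : Fin (I + 1) → Set M,
      (∀ i, IsOpen (f i) ∧ unstable (f i)) → Pairwise (Function.onFun Disjoint f) → False)
    (hball : ∀ (x : M) (r : ℝ), R_c < r → unstable (Metric.ball x r)) :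
    Metric.diam (Set.univ : Set M) ≤ 2 * (I + 1) * R_c :=
  stmt_17_general geodesic unstable I R_c hindex hball
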